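/- A subshift X ⊆ Σ^ℤ has a g-function if and only if there exists n ∈ ℕ such that the n-block system X^[n] of X is right instantaneous. -/

import Mathlib

open Set Filter Topology

/-! Basic symbolic dynamics notions.

* The alphabet is a nonempty finite type `A` with the discrete topology; `A^ℤ` and `A^ℕ`
  carry the product topology.
* A left-infinite sequence `x⁻ = (x_i)_{i ≤ 0}` is encoded as `u : ℕ → A` with `u n = x (-n)`.
* Finite words are lists, read left to right.
-/

/-- The shift `S`. -/
def shiftMap {A : Type*} (x : ℤ → A) : ℤ → A := fun i => x (i + 1)

/-- A subshift: a nonempty closed shift-invariant subset of `A^ℤ`. -/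
def IsSubshift {A : Type*} [TopologicalSpace A] (X : Set (ℤ → A)) : Prop :=
  X.Nonempty ∧ IsClosed X ∧ shiftMap '' X = X

/-- `X⁻`: the left-infinite rays of points of `X` (encoded via `u n = x (-n)`). -/
def Xminus {A : Type*} (X : Set (ℤ → A)) : Set (ℕ → A) :=
  {u | ∃ x ∈ X, ∀ n : ℕ, u n = x (-(n : ℤ))}

/-- The word `w` occurs in `x` (as a block of consecutive coordinates). -/
def Occurs {A : Type*} (w : List A) (x : ℤ → A) : Prop :=
  ∃ i : ℤ, ∀ j : Fin w.length, x (i + ((j : ℕ) : ℤ)) = w.get j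

/-- A finite word is admissible for `X` if it occurs in some point of `X`. -/
def Admissible {A : Type*} (X : Set (ℤ → A)) (w : List A) : Prop :=
  ∃ x ∈ X, Occurs w x

/-- The left ray `u` ends in the word `w`, i.e. `(x_{-k},…,x_0) = w` where `|w| = k+1`. -/
def EndsIn {A : Type*} (u : ℕ → A) (w : List A) : Prop :=
  ∀ j : Fin w.length, u (w.length - 1 - (j : ℕ)) = w.get j

/-- `Γ₁⁺(x⁻)`: the letters that can follow the left ray `u` in `X`. -/
def Gamma1 {A : Type*} (X : Set (ℤ → A)) (u : ℕ → A) : Set A :=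
  {σ | ∃ x ∈ X, (∀ n : ℕ, x (-(n : ℤ)) = u n) ∧ x 1 = σ}

/-- `x` carries the word `b` on the coordinate interval `[-(|b| - 1), 0]`. -/
def EndsAtZero {A : Type*} (x : ℤ → A) (b : List A) : Prop :=
  ∀ j : Fin b.length, x (((j : ℕ) : ℤ) - ((b.length : ℤ) - 1)) = b.get j

/-- `c ∈ ω⁺(b)`: every point of `X` carrying `b` ending at coordinate `0` can be modified
on the positive coordinates so as to continue with the word `c`. -/
def OmegaWord {A : Type*} (X : Set (ℤ → A)) (b c : List A) : Prop :=
  ∀ x ∈ X, EndsAtZero x b →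
    ∃ x' ∈ X, (∀ i : ℤ, i ≤ 0 → x' i = x i) ∧
      ∀ j : Fin c.length, x' (((j : ℕ) : ℤ) + 1) = c.get j

/-- `ω₁⁺(b)`. -/
def omega1 {A : Type*} (X : Set (ℤ → A)) (b : List A) : Set A :=
  {σ | OmegaWord X b [σ]}

/-- The word `(x_{-n},…,x_0)` read off the left ray `u`. -/
def lastWord {A : Type*} (u : ℕ → A) (n : ℕ) : List A :=
  List.ofFn fun j : Fin (n + 1) => u (n - (j : ℕ))

/-- `Δ₁⁺(x⁻) = ⋃ₙ ω₁⁺((x_{-n},…,x_0))`. -/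
def Delta1 {A : Type*} (X : Set (ℤ → A)) (u : ℕ → A) : Set A :=
  ⋃ n : ℕ, omega1 X (lastWord u n)

/-- Property g: `Δ₁⁺(x⁻) ≠ ∅` for every `x⁻ ∈ X⁻`. -/
def PropertyG {A : Type*} (X : Set (ℤ → A)) : Prop :=
  ∀ u ∈ Xminus X, (Delta1 X u).Nonempty

/-- A g-function for `X`, encoded as a total function `g : (ℕ → A) → A → ℝ`:
continuity (of the restriction to the graph of `Γ₁⁺`, i.e. of the map on
`{(x⁻,σ) : σ ∈ Γ₁⁺(x⁻)}`), values in `[0,1]` there, and the normalization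
`∑_{σ ∈ Γ₁⁺(x⁻)} g (x⁻, σ) = 1`. -/
def IsGFunction {A : Type*} [Fintype A] [TopologicalSpace A] (X : Set (ℤ → A))
    (g : (ℕ → A) → A → ℝ) : Prop :=
  ContinuousOn (fun p : (ℕ → A) × A => g p.1 p.2)
      {p : (ℕ → A) × A | p.1 ∈ Xminus X ∧ p.2 ∈ Gamma1 X p.1} ∧
  (∀ u ∈ Xminus X, ∀ σ ∈ Gamma1 X u, g u σ ∈ Set.Icc (0 : ℝ) 1) ∧
  (∀ u ∈ Xminus X, ∑ σ : A, (Gamma1 X u).indicator (g u) σ = 1)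

/-- Property (D): for every admissible word `b` and letter `σ` with `bσ` admissible there
is a word `a` with `ab` admissible and `σ ∈ ω₁⁺(ab)`. -/
def PropertyD {A : Type*} (X : Set (ℤ → A)) : Prop :=
  ∀ (b : List A) (σ : A), b ≠ [] → Admissible X (b ++ [σ]) →
    ∃ a : List A, a ≠ [] ∧ Admissible X (a ++ b) ∧ σ ∈ omega1 X (a ++ b)

/-- The `n`-block map, sending `x` to the sequence of its `n`-blocks. -/
def blockMap {A : Type*} (n : ℕ) (x : ℤ → A) : ℤ → (Fin n → A) :=
  fun i j => x (i + ((j : ℕ) : ℤ))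

/-- The `n`-block system of `X`, a subshift over the alphabet of `n`-blocks. -/
def blockSystem {A : Type*} (X : Set (ℤ → A)) (n : ℕ) : Set (ℤ → (Fin n → A)) :=
  blockMap n '' X

/-- A subshift is right instantaneous if `ω₁⁺(λ) ≠ ∅` for every letter `λ` occurring in
one of its points. -/
def RightInstantaneous {B : Type*} (Y : Set (ℤ → B)) : Prop :=
  ∀ β : B, Admissible Y [β] → (omega1 Y [β]).Nonempty

/-!
If every admissible `n`-word `b` has some `σ_b ∈ ω₁⁺(b)`, the g-function putting mass `1` on
`σ_b` for `b` the last `n` letters of `x⁻` depends on finitely many coordinates, hence is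
continuous; and `ω₁⁺` of an `n`-word is nonempty exactly when `ω₁⁺` of the corresponding
letter of `X^[n]` is.

Conversely, let `g` be a g-function, `x⁻ ∈ X⁻` and `σ ∈ Γ₁⁺(x⁻)` with `g(x⁻, σ) > 0`. The graph
of `Γ₁⁺` is closed and `g` is continuous on it, so for `y⁻` close to `x⁻` the set `Γ₁⁺(y⁻)`
carries almost all the mass of `g(x⁻, ·)` and must contain `σ`; thus `σ ∈ ω₁⁺` of a long
enough suffix of `x⁻`. Compactness of `X⁻` bounds the length of these suffixes uniformly.
-/

open PiNat

section Words

variable {A : Type*} {X : Set (ℤ → A)} {n : ℕ}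

def leftRay (x : ℤ → A) : ℕ → A := fun m => x (-m)

lemma leftRay_mem_xminus {x : ℤ → A} (hx : x ∈ X) : leftRay x ∈ Xminus X :=
  ⟨x, hx, fun _ => rfl⟩

lemma xminus_eq_image : Xminus X = leftRay '' X := by
  ext u
  exact ⟨fun ⟨x, hx, hu⟩ => ⟨x, hx, funext fun m => (hu m).symm⟩,
    fun ⟨x, hx, hu⟩ => hu ▸ leftRay_mem_xminus hx⟩

/-- The last `n` letters `(x_{-(n-1)}, …, x_0)` of the left ray `u m = x_{-m}`, in reading order. -/
def lastBlock (n : ℕ) (u : ℕ → A) : Fin n → A := fun j => u (n - 1 - j)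

lemma lastWord_eq_ofFn_lastBlock (u : ℕ → A) (k : ℕ) :
    lastWord u k = List.ofFn (lastBlock (k + 1) u) := rfl

lemma lastBlock_eq_lastBlock_iff {u v : ℕ → A} :
    lastBlock n u = lastBlock n v ↔ u ∈ cylinder v n := by
  refine ⟨fun h i hi => ?_, fun h => funext fun j => h _ (by omega)⟩
  simpa [lastBlock, show n - 1 - (n - 1 - i) = i by omega] using
    congrFun h ⟨n - 1 - i, by omega⟩

lemma blockMap_one_sub (x : ℤ → A) : blockMap n x (1 - n) = lastBlock n (leftRay x) := by
  funext j
  simp only [blockMap, lastBlock, leftRay]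
  congr 1
  omega

lemma blockMap_shift (x : ℤ → A) (p k : ℤ) :
    blockMap n (fun i => x (i + k)) p = blockMap n x (p + k) := by
  funext j
  simp only [blockMap]
  ring_nf

lemma occurs_ofFn_iff {β : Fin n → A} {x : ℤ → A} :
    Occurs (List.ofFn β) x ↔ ∃ p, blockMap n x p = β := by
  simp [Occurs, blockMap, funext_iff, Fin.forall_iff]

lemma endsAtZero_ofFn_iff {β : Fin n → A} {x : ℤ → A} :
    EndsAtZero x (List.ofFn β) ↔ blockMap n x (1 - n) = β := by
  simp only [EndsAtZero, blockMap, funext_iff, Fin.forall_iff, List.length_ofFn,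
    List.get_eq_getElem, List.getElem_ofFn]
  refine forall_congr' fun j => forall_congr' fun hj => ?_
  ring_nf

lemma admissible_ofFn_iff {β : Fin n → A} :
    Admissible X (List.ofFn β) ↔ ∃ x ∈ X, ∃ p, blockMap n x p = β := by
  simp only [Admissible, occurs_ofFn_iff]

lemma blockMap_one_eq_const_iff {B : Type*} {y : ℤ → B} {p : ℤ} {b : B} :
    blockMap 1 y p = (fun _ => b) ↔ y p = b := by
  simp [blockMap, funext_iff]

lemma Int.forall_lt_one_iff {p : ℤ → Prop} : (∀ i < 1, p i) ↔ ∀ m : ℕ, p (-m) := by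
  refine ⟨fun h m => h _ (by omega), fun h i hi => ?_⟩
  simpa [Int.toNat_of_nonneg (by omega : 0 ≤ -i)] using h (-i).toNat

lemma mem_gamma1_leftRay_iff {z : ℤ → A} {σ : A} :
    σ ∈ Gamma1 X (leftRay z) ↔ ∃ z' ∈ X, (∀ i < 1, z' i = z i) ∧ z' 1 = σ := by
  simp only [Gamma1, leftRay, Int.forall_lt_one_iff, Set.mem_ofPred_eq]

lemma continuous_leftRay [TopologicalSpace A] : Continuous (leftRay : (ℤ → A) → ℕ → A) :=
  continuous_pi fun _ => continuous_apply _

lemma continuous_lastBlock [TopologicalSpace A] : Continuous (lastBlock n : (ℕ → A) → Fin n → A) :=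
  continuous_pi fun _ => continuous_apply _

end Words

section Shift

variable {A : Type*} {X : Set (ℤ → A)} {n : ℕ}

lemma IsSubshift.shiftMap_mem_iff [TopologicalSpace A] (hX : IsSubshift X) {x : ℤ → A} :
    shiftMap x ∈ X ↔ x ∈ X := by
  refine ⟨fun h => ?_, fun h => hX.2.2 ▸ mem_image_of_mem shiftMap h⟩
  obtain ⟨y, hy, hyx⟩ : shiftMap x ∈ shiftMap '' X := hX.2.2.symm ▸ h
  have : y = x := funext fun i => by simpa [shiftMap] using congrFun hyx (i - 1)
  exact this ▸ hy

lemma IsSubshift.shift_mem [TopologicalSpace A] (hX : IsSubshift X) {x : ℤ → A} (hx : x ∈ X)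
    (k : ℤ) : (fun i => x (i + k)) ∈ X := by
  induction k using Int.induction_on with
  | zero => simpa using hx
  | succ k ih =>
    convert hX.shiftMap_mem_iff.2 ih using 1
    funext i
    simp only [shiftMap]
    ring_nf
  | pred k ih =>
    rw [← hX.shiftMap_mem_iff]
    convert ih using 1
    funext i
    simp only [shiftMap]
    ring_nf

lemma exists_lastBlock_eq_of_admissible [TopologicalSpace A] (hX : IsSubshift X)
    {β : Fin n → A} (hβ : Admissible X (List.ofFn β)) :
    ∃ z ∈ X, lastBlock n (leftRay z) = β := by
  obtain ⟨x, hx, p, hp⟩ := admissible_ofFn_iff.1 hβ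
  refine ⟨fun i => x (i + (p - (1 - n))), hX.shift_mem hx _, ?_⟩
  rw [← blockMap_one_sub, blockMap_shift, add_sub_cancel, hp]

/-- `σ ∈ ω₁⁺(β)`, with `β` placed on `[p, p + n)` instead of ending at `0`. -/
def FollowsBlockAt (X : Set (ℤ → A)) (β : Fin n → A) (p : ℤ) (σ : A) : Prop :=
  ∀ z ∈ X, blockMap n z p = β → ∃ z' ∈ X, (∀ i < p + n, z' i = z i) ∧ z' (p + n) = σ

lemma mem_omega1_ofFn_iff {β : Fin n → A} {σ : A} :
    σ ∈ omega1 X (List.ofFn β) ↔ FollowsBlockAt X β (1 - n) σ := by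
  simp [omega1, OmegaWord, FollowsBlockAt, endsAtZero_ofFn_iff, Int.lt_iff_add_one_le]

lemma mem_omega1_ofFn_iff_forall_mem_gamma1 {β : Fin n → A} {σ : A} :
    σ ∈ omega1 X (List.ofFn β) ↔
      ∀ z ∈ X, lastBlock n (leftRay z) = β → σ ∈ Gamma1 X (leftRay z) := by
  simp only [mem_omega1_ofFn_iff, FollowsBlockAt, blockMap_one_sub, mem_gamma1_leftRay_iff,
    sub_add_cancel]

lemma FollowsBlockAt.move [TopologicalSpace A] (hX : IsSubshift X) {β : Fin n → A} {p : ℤ}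
    {σ : A} (h : FollowsBlockAt X β p σ) (q : ℤ) : FollowsBlockAt X β q σ := by
  intro z hz hzβ
  obtain ⟨w', hw', hagree, hσ⟩ :=
    h _ (hX.shift_mem hz (q - p)) (by rw [blockMap_shift, add_sub_cancel, hzβ])
  refine ⟨fun i => w' (i + (p - q)), hX.shift_mem hw' _, fun i hi => ?_, ?_⟩
  · simpa [show i + (p - q) + (q - p) = i by ring] using hagree (i + (p - q)) (by omega)
  · simpa [show q + n + (p - q) = p + n by ring] using hσ

lemma followsBlockAt_iff [TopologicalSpace A] (hX : IsSubshift X) {β : Fin n → A} {σ : A}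
    (p q : ℤ) : FollowsBlockAt X β p σ ↔ FollowsBlockAt X β q σ :=
  ⟨fun h => h.move hX q, fun h => h.move hX p⟩

end Shift

section BlockSystem

variable {A : Type*} {X : Set (ℤ → A)} {n : ℕ}

lemma List.singleton_eq_ofFn {B : Type*} (b : B) : [b] = List.ofFn (fun _ : Fin 1 => b) := by
  simp

lemma admissible_blockSystem_singleton_iff {β : Fin n → A} :
    Admissible (blockSystem X n) [β] ↔ Admissible X (List.ofFn β) := by
  rw [List.singleton_eq_ofFn β, admissible_ofFn_iff, admissible_ofFn_iff]
  simp [blockSystem, blockMap_one_eq_const_iff]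

lemma forall_blockMap_eq_iff {z z' : ℤ → A} {m : ℕ} {q : ℤ} :
    (∀ i < q, blockMap (m + 1) z' i = blockMap (m + 1) z i) ↔ ∀ i < q + m, z' i = z i := by
  refine ⟨fun h i hi => ?_, fun h i hi => funext fun j => h _ (by have := j.isLt; omega)⟩
  by_cases hiq : i < q
  · simpa [blockMap] using congrFun (h i hiq) 0
  · simpa [blockMap, Int.toNat_of_nonneg (by omega : 0 ≤ i - (q - 1))] using
      congrFun (h (q - 1) (by omega)) ⟨(i - (q - 1)).toNat, by omega⟩

lemma FollowsBlockAt.of_blockSystem {m : ℕ} {β γ : Fin (m + 1) → A}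
    (h : FollowsBlockAt (blockSystem X (m + 1)) (fun _ : Fin 1 => β) 0 γ) :
    FollowsBlockAt X β 0 (γ (Fin.last m)) := by
  intro z hz hzβ
  obtain ⟨_, ⟨z', hz', rfl⟩, hagree, hγ⟩ := h _ ⟨z, hz, rfl⟩ (blockMap_one_eq_const_iff.2 hzβ)
  refine ⟨z', hz', fun i hi => forall_blockMap_eq_iff.1 hagree i (by push_cast at *; omega), ?_⟩
  rw [← hγ]
  simp [blockMap, add_comm]

lemma FollowsBlockAt.blockSystem {m : ℕ} {β : Fin (m + 1) → A} {τ : A}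
    (h : FollowsBlockAt X β 0 τ) :
    FollowsBlockAt (blockSystem X (m + 1)) (fun _ : Fin 1 => β) 0 (Fin.snoc (Fin.tail β) τ) := by
  rintro _ ⟨z, hz, rfl⟩ hzβ
  rw [blockMap_one_eq_const_iff] at hzβ
  obtain ⟨z', hz', hagree, hτ⟩ := h z hz hzβ
  refine ⟨blockMap (m + 1) z', ⟨z', hz', rfl⟩,
    forall_blockMap_eq_iff.2 fun i hi => hagree i (by push_cast at *; omega), ?_⟩
  funext j
  induction j using Fin.lastCases with
  | last => simpa [blockMap, add_comm] using hτ
  | cast j =>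
    have := congrFun hzβ j.succ
    simp only [blockMap, Fin.val_succ] at this
    simp only [blockMap, Fin.snoc_castSucc, Fin.tail, Fin.val_castSucc]
    rw [hagree _ (by push_cast; omega), ← this]
    push_cast
    ring_nf

lemma omega1_blockSystem_nonempty_iff [TopologicalSpace A] (hX : IsSubshift X) (hn : 1 ≤ n)
    {β : Fin n → A} :
    (omega1 (blockSystem X n) [β]).Nonempty ↔ (omega1 X (List.ofFn β)).Nonempty := by
  obtain ⟨m, rfl⟩ : ∃ m, n = m + 1 := ⟨n - 1, by omega⟩
  simp only [List.singleton_eq_ofFn, Set.Nonempty, mem_omega1_ofFn_iff,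
    followsBlockAt_iff hX (1 - ((m + 1 : ℕ) : ℤ)) 0, Nat.cast_one, sub_self]
  exact ⟨fun ⟨_, h⟩ => ⟨_, h.of_blockSystem⟩, fun ⟨_, h⟩ => ⟨_, h.blockSystem⟩⟩

def Omega1NonemptyOfLength (X : Set (ℤ → A)) (n : ℕ) : Prop :=
  ∀ β : Fin n → A, Admissible X (List.ofFn β) → (omega1 X (List.ofFn β)).Nonempty

lemma rightInstantaneous_blockSystem_iff [TopologicalSpace A] (hX : IsSubshift X) (hn : 1 ≤ n) :
    RightInstantaneous (blockSystem X n) ↔ Omega1NonemptyOfLength X n :=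
  forall_congr' fun _ =>
    imp_congr admissible_blockSystem_singleton_iff (omega1_blockSystem_nonempty_iff hX hn)

end BlockSystem

lemma tendsto_indicator_nhds_zero {α M : Type*} [TopologicalSpace α] [TopologicalSpace M] [Zero M]
    {s : Set α} {f : α → M} {a : α} (h : Tendsto f (𝓝[s] a) (𝓝 0)) :
    Tendsto (s.indicator f) (𝓝 a) (𝓝 0) := by
  rw [← nhdsWithin_univ, ← union_compl_self s, nhdsWithin_union]
  refine Tendsto.sup (h.congr' ?_) (tendsto_const_nhds.congr' ?_)
  · exact eventually_nhdsWithin_of_forall fun x hx => (indicator_of_mem hx f).symm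
  · exact eventually_nhdsWithin_of_forall fun x hx => (indicator_of_notMem hx f).symm

lemma Finset.sum_indicator_add_le {ι : Type*} [Fintype ι] {S : Set ι} {h : ι → ℝ}
    (hh : ∀ i, 0 ≤ h i) {i₀ : ι} (hi₀ : i₀ ∉ S) : ∑ i, S.indicator h i + h i₀ ≤ ∑ i, h i := by
  calc ∑ i, S.indicator h i + h i₀ = ∑ i, S.indicator h i + Sᶜ.indicator h i₀ := by
        rw [indicator_of_mem (show i₀ ∈ Sᶜ from hi₀)]
    _ ≤ ∑ i, S.indicator h i + ∑ i, Sᶜ.indicator h i := by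
        gcongr
        exact Finset.single_le_sum (fun i _ => indicator_nonneg (fun i _ => hh i) i)
          (Finset.mem_univ i₀)
    _ = ∑ i, h i := by
        rw [← Finset.sum_add_distrib]
        simp only [indicator_self_add_compl_apply]

section Topology

variable {A : Type*} [TopologicalSpace A] {X : Set (ℤ → A)}

lemma exists_cylinder_subset [DiscreteTopology A] {u : ℕ → A} {s : Set (ℕ → A)} (hs : s ∈ 𝓝 u) :
    ∃ k, cylinder u k ⊆ s := by
  obtain ⟨_, ⟨x, k, rfl⟩, hu, hsub⟩ := (isTopologicalBasis_cylinders fun _ => A).mem_nhds_iff.1 hs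
  exact ⟨k, mem_cylinder_iff_eq.1 hu ▸ hsub⟩

variable [Finite A]

lemma IsSubshift.isCompact_xminus (hX : IsSubshift X) : IsCompact (Xminus X) :=
  xminus_eq_image ▸ hX.2.1.isCompact.image continuous_leftRay

variable [DiscreteTopology A]

lemma IsSubshift.isClosed_graph_gamma1 (hX : IsSubshift X) :
    IsClosed {p : (ℕ → A) × A | p.1 ∈ Xminus X ∧ p.2 ∈ Gamma1 X p.1} := by
  have hgraph : {p : (ℕ → A) × A | p.1 ∈ Xminus X ∧ p.2 ∈ Gamma1 X p.1} =
      (fun x => (leftRay x, x 1)) '' X := by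
    ext ⟨u, σ⟩
    constructor
    · rintro ⟨-, x, hx, hxu, rfl⟩
      exact ⟨x, hx, Prod.ext (funext hxu) rfl⟩
    · rintro ⟨x, hx, hxu⟩
      simp only [Prod.mk.injEq] at hxu
      obtain ⟨rfl, rfl⟩ := hxu
      exact ⟨leftRay_mem_xminus hx, x, hx, fun _ => rfl, rfl⟩
  rw [hgraph]
  exact (hX.2.1.isCompact.image
    (continuous_leftRay.prodMk (continuous_apply 1))).isClosed

lemma PropertyG.exists_omega1NonemptyOfLength (hX : IsSubshift X) (hG : PropertyG X) :
    ∃ n, 1 ≤ n ∧ Omega1NonemptyOfLength X n := by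
  have hk : ∀ u ∈ Xminus X, ∃ k, (omega1 X (lastWord u k)).Nonempty := fun u hu => by
    obtain ⟨σ, hσ⟩ := hG u hu
    obtain ⟨k, hk⟩ := mem_iUnion.1 hσ
    exact ⟨k, σ, hk⟩
  choose k hk using hk
  obtain ⟨t, ht⟩ := hX.isCompact_xminus.elim_nhds_subcover' (fun u hu => cylinder u (k u hu + 1))
    fun u _ => (isOpen_cylinder _ _ _).mem_nhds (self_mem_cylinder _ _)
  refine ⟨t.sup (fun u => k u u.2) + 1, by omega, fun β hβ => ?_⟩
  obtain ⟨z, hz, rfl⟩ := exists_lastBlock_eq_of_admissible hX hβ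
  obtain ⟨u, hut, hzu⟩ : ∃ u ∈ t, leftRay z ∈ cylinder (u : ℕ → A) (k u u.2 + 1) := by
    simpa using ht (leftRay_mem_xminus hz)
  obtain ⟨σ, hσ⟩ := hk u u.2
  refine ⟨σ, mem_omega1_ofFn_iff_forall_mem_gamma1.2 fun z' hz' hz'z => ?_⟩
  rw [lastWord_eq_ofFn_lastBlock, mem_omega1_ofFn_iff_forall_mem_gamma1] at hσ
  refine hσ z' hz' (lastBlock_eq_lastBlock_iff.2 ?_)
  rw [← mem_cylinder_iff_eq.1 hzu]
  exact cylinder_anti _ (Nat.succ_le_succ (Finset.le_sup (f := fun u : Xminus X => k u u.2) hut))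
    (lastBlock_eq_lastBlock_iff.1 hz'z)

end Topology

section GFunction

variable {A : Type*} [Fintype A] [TopologicalSpace A] {X : Set (ℤ → A)} {g : (ℕ → A) → A → ℝ}

lemma IsGFunction.exists_pos (hg : IsGFunction X g) {u : ℕ → A} (hu : u ∈ Xminus X) :
    ∃ σ ∈ Gamma1 X u, 0 < g u σ := by
  obtain ⟨σ, -, hσ⟩ := Finset.exists_lt_of_sum_lt (s := Finset.univ) (f := 0)
    (g := (Gamma1 X u).indicator (g u)) (by simp [hg.2.2 u hu])
  by_cases h : σ ∈ Gamma1 X u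
  · exact ⟨σ, h, by simpa [indicator_of_mem h] using hσ⟩
  · simp [indicator_of_notMem h] at hσ

variable [DiscreteTopology A]

lemma IsGFunction.tendsto_sum_indicator_gamma1 (hX : IsSubshift X) (hg : IsGFunction X g)
    (u : ℕ → A) :
    Tendsto (fun v => ∑ τ, (Gamma1 X v).indicator ((Gamma1 X u).indicator (g u)) τ)
      (𝓝[Xminus X] u) (𝓝 1) := by
  set D := {p : (ℕ → A) × A | p.1 ∈ Xminus X ∧ p.2 ∈ Gamma1 X p.1}
  set h := (Gamma1 X u).indicator (g u)
  set f : (ℕ → A) × A → ℝ := fun p => g p.1 p.2 - h p.2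
  have hf : ∀ τ, Tendsto f (𝓝[D] (u, τ)) (𝓝 0) := by
    intro τ
    by_cases hτ : (u, τ) ∈ D
    · have hf0 : f (u, τ) = 0 := by simp [f, h, indicator_of_mem hτ.2]
      rw [← hf0]
      exact (hg.1 _ hτ).sub
        ((continuous_of_discreteTopology (f := h)).comp continuous_snd).continuousWithinAt
    · rw [notMem_closure_iff_nhdsWithin_eq_bot.1 (by rwa [hX.isClosed_graph_gamma1.closure_eq])]
      exact tendsto_bot
  have hlim : Tendsto (fun v => ∑ τ, D.indicator f (v, τ)) (𝓝 u) (𝓝 0) := by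
    simpa using tendsto_finsetSum Finset.univ fun τ _ =>
      (tendsto_indicator_nhds_zero (hf τ)).comp (tendsto_id.prodMk_nhds tendsto_const_nhds)
  have heq : ∀ v ∈ Xminus X,
      1 - ∑ τ, D.indicator f (v, τ) = ∑ τ, (Gamma1 X v).indicator h τ := by
    intro v hv
    rw [← hg.2.2 v hv, ← Finset.sum_sub_distrib]
    refine Finset.sum_congr rfl fun τ _ => ?_
    by_cases hτ : τ ∈ Gamma1 X v <;> simp [D, f, hv, hτ]
  simpa using (tendsto_const_nhds.sub (hlim.mono_left nhdsWithin_le_nhds)).congr'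
    (eventually_nhdsWithin_of_forall heq)

lemma IsGFunction.eventually_mem_gamma1 (hX : IsSubshift X) (hg : IsGFunction X g)
    {u : ℕ → A} (hu : u ∈ Xminus X) {σ : A} (hσ : σ ∈ Gamma1 X u) (hpos : 0 < g u σ) :
    ∀ᶠ v in 𝓝[Xminus X] u, σ ∈ Gamma1 X v := by
  have hh : ∀ τ, 0 ≤ (Gamma1 X u).indicator (g u) τ :=
    indicator_nonneg fun τ hτ => (hg.2.1 u hu τ hτ).1
  filter_upwards [(hg.tendsto_sum_indicator_gamma1 hX u).eventually
    (lt_mem_nhds (sub_lt_self 1 hpos))] with v hv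
  by_contra hσv
  have := Finset.sum_indicator_add_le hh hσv
  rw [hg.2.2 u hu, indicator_of_mem hσ] at this
  linarith

lemma IsGFunction.propertyG (hX : IsSubshift X) (hg : IsGFunction X g) : PropertyG X := by
  intro u hu
  obtain ⟨σ, hσ, hpos⟩ := hg.exists_pos hu
  obtain ⟨k, hk⟩ :=
    exists_cylinder_subset (eventually_nhdsWithin_iff.1 (hg.eventually_mem_gamma1 hX hu hσ hpos))
  refine ⟨σ, mem_iUnion.2 ⟨k, ?_⟩⟩
  rw [lastWord_eq_ofFn_lastBlock, mem_omega1_ofFn_iff_forall_mem_gamma1]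
  intro z hz hzu
  exact hk (cylinder_anti u k.le_succ (lastBlock_eq_lastBlock_iff.1 hzu)) (leftRay_mem_xminus hz)

lemma Omega1NonemptyOfLength.exists_isGFunction [Nonempty A] {n : ℕ}
    (hW : Omega1NonemptyOfLength X n) : ∃ g, IsGFunction X g := by
  classical
  have : ∀ β : Fin n → A, ∃ σ, Admissible X (List.ofFn β) → σ ∈ omega1 X (List.ofFn β) :=
    fun β => by
      by_cases hβ : Admissible X (List.ofFn β)
      · exact (hW β hβ).imp fun _ hσ _ => hσ
      · exact ⟨Classical.arbitrary A, fun h => absurd h hβ⟩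
  choose F hF using this
  have hFmem : ∀ u ∈ Xminus X, F (lastBlock n u) ∈ Gamma1 X u := by
    rw [xminus_eq_image]
    rintro _ ⟨x, hx, rfl⟩
    have hadm : Admissible X (List.ofFn (lastBlock n (leftRay x))) :=
      admissible_ofFn_iff.2 ⟨x, hx, _, blockMap_one_sub x⟩
    exact mem_omega1_ofFn_iff_forall_mem_gamma1.1 (hF _ hadm) x hx rfl
  refine ⟨fun u => Pi.single (F (lastBlock n u)) 1, ?_, fun u _ σ _ => ?_, fun u hu => ?_⟩
  · exact ((continuous_of_discreteTopology
      (f := fun q : (Fin n → A) × A => (Pi.single (F q.1) 1 : A → ℝ) q.2)).comp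
      ((continuous_lastBlock.comp continuous_fst).prodMk continuous_snd)).continuousOn
  · rcases eq_or_ne σ (F (lastBlock n u)) with rfl | h <;> simp [*]
  · rw [indicator_eq_self.2 (Pi.support_single_subset.trans
      (singleton_subset_iff.2 (hFmem u hu)))]
    simp

end GFunction

theorem stmt10_general {A : Type*} [Fintype A] [TopologicalSpace A] [DiscreteTopology A]
    (X : Set (ℤ → A)) (hX : IsSubshift X) :
    (∃ g : (ℕ → A) → A → ℝ, IsGFunction X g) ↔
      ∃ n : ℕ, 1 ≤ n ∧ RightInstantaneous (blockSystem X n) := by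
  constructor
  · rintro ⟨g, hg⟩
    obtain ⟨n, hn, hW⟩ := (hg.propertyG hX).exists_omega1NonemptyOfLength hX
    exact ⟨n, hn, (rightInstantaneous_blockSystem_iff hX hn).2 hW⟩
  · rintro ⟨n, hn, hRI⟩
    have : Nonempty A := ⟨hX.1.some 0⟩
    exact ((rightInstantaneous_blockSystem_iff hX hn).1 hRI).exists_isGFunction

/-- Proposition 4.1.  A subshift has a g-function if and only if one
of its `n`-block systems (`n ≥ 1`) is right instantaneous. -/
theorem stmt10 {A : Type*} [Fintype A] [Nonempty A] [TopologicalSpace A] [DiscreteTopology A]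
    (X : Set (ℤ → A)) (hX : IsSubshift X) :
    (∃ g : (ℕ → A) → A → ℝ, IsGFunction X g) ↔
      ∃ n : ℕ, 1 ≤ n ∧ RightInstantaneous (blockSystem X n) :=
  stmt10_general X hX
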